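/- Let U ⊆ ℂ be open and f : U → ℂ holomorphic. Define ψ : U → ℂ by ψ(z) = 2f(z)/(1 + |f(z)|²). Then for every z ∈ U one has Δψ(z) = −(8|f′(z)|²/(1 + |f(z)|²)²)·ψ(z), where Δ acts componentwise on the real and imaginary parts of ψ. Consequently the real-valued functions Re ψ and Im ψ each satisfy Δφ = −(8|f′|²/(1+|f|²)²)·φ, i.e. they are eigenfunctions with eigenvalue 2 of Δ_g = −((1+|f|²)²/(4|f′|²))Δ wherever f′ ≠ 0. -/

import Mathlib

/-- The Euclidean Laplacian `Δ = ∂²/∂x² + ∂²/∂y²` of a real-valued function on `ℂ ≃ ℝ²`. -/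
noncomputable def lapR (φ : ℂ → ℝ) (z : ℂ) : ℝ :=
  fderiv ℝ (fun w => fderiv ℝ φ w 1) z 1 +
  fderiv ℝ (fun w => fderiv ℝ φ w Complex.I) z Complex.I

/-- The Euclidean Laplacian acting componentwise on a complex-valued function on `ℂ ≃ ℝ²`. -/
noncomputable def lapC (φ : ℂ → ℂ) (z : ℂ) : ℂ :=
  fderiv ℝ (fun w => fderiv ℝ φ w 1) z 1 +
  fderiv ℝ (fun w => fderiv ℝ φ w Complex.I) z Complex.I

/-!
Write `ψ = invStereo ∘ f` with `invStereo w = ρ(w) w` and `ρ(w) = 2 / (1 + |w|²)`. The theorem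
follows from two facts.

* The Laplacian is conformally covariant under holomorphic maps: `Δ(F ∘ f) = |f'|² (ΔF) ∘ f`.
  By the second-order chain rule, `D²(F ∘ f)(v, v) = D²F(f'v, f'v) + DF(D²f(v, v))`; summed over
  `v ∈ {1, i}` the second term is `DF(Δf) = 0` since `f` is harmonic, and since multiplication by
  `f'` is a rotation followed by a dilation by `|f'|`, it multiplies the trace of the symmetric
  form `D²F` by `|f'|²`.
* A direct computation gives `Δ invStereo = -2ρ² invStereo`: the horizontal coordinates of the
  unit sphere are eigenfunctions of its Laplacian with eigenvalue `2`, and the round metric is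
  `ρ² |dw|²` in the stereographic chart.
-/

open Complex Laplacian InnerProductSpace Topology
open scoped RealInnerProductSpace

section SecondDerivative

variable {𝕜 : Type*} [NontriviallyNormedField 𝕜]
  {E : Type*} [NormedAddCommGroup E] [NormedSpace 𝕜 E]
  {E' : Type*} [NormedAddCommGroup E'] [NormedSpace 𝕜 E']
  {G : Type*} [NormedAddCommGroup G] [NormedSpace 𝕜 G]

theorem ContDiffAt.differentiableAt_fderiv {φ : E → G} {z : E} (h : ContDiffAt 𝕜 2 φ z) :
    DifferentiableAt 𝕜 (fderiv 𝕜 φ) z :=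
  (h.fderiv_right (m := 1) le_rfl).differentiableAt one_ne_zero

theorem fderiv_fderiv_apply {φ : E → G} {z : E} (h : DifferentiableAt 𝕜 (fderiv 𝕜 φ) z)
    (u v : E) : fderiv 𝕜 (fun w => fderiv 𝕜 φ w v) z u = fderiv 𝕜 (fderiv 𝕜 φ) z u v := by
  rw [fderiv_clm_apply h (differentiableAt_const v)]
  simp

theorem fderiv_fderiv_comp_apply {F : E' → G} {f : E → E'} {z : E}
    (hF : ContDiffAt 𝕜 2 F (f z)) (hf : ContDiffAt 𝕜 2 f z) (u v : E) :
    fderiv 𝕜 (fderiv 𝕜 (F ∘ f)) z u v =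
      fderiv 𝕜 (fderiv 𝕜 F) (f z) (fderiv 𝕜 f z u) (fderiv 𝕜 f z v)
        + fderiv 𝕜 F (f z) (fderiv 𝕜 (fderiv 𝕜 f) z u v) := by
  have hF' : ∀ᶠ w in 𝓝 z, DifferentiableAt 𝕜 F (f w) :=
    hf.continuousAt.eventually ((hF.eventually (by simp)).mono fun _ h =>
      h.differentiableAt (by simp))
  have hf' : ∀ᶠ w in 𝓝 z, DifferentiableAt 𝕜 f w :=
    (hf.eventually (by simp)).mono fun _ h => h.differentiableAt (by simp)
  have hchain : fderiv 𝕜 (F ∘ f) =ᶠ[𝓝 z] fun w => (fderiv 𝕜 F (f w)).comp (fderiv 𝕜 f w) := by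
    filter_upwards [hF', hf'] with w hFw hfw using fderiv_comp w hFw hfw
  have h : HasFDerivAt (fun w => (fderiv 𝕜 F (f w)).comp (fderiv 𝕜 f w)) _ z :=
    (hF.differentiableAt_fderiv.hasFDerivAt.comp z (hf.differentiableAt (by simp)).hasFDerivAt)
      |>.clm_comp hf.differentiableAt_fderiv.hasFDerivAt
  rw [hchain.fderiv_eq, h.fderiv]
  simp [add_comm]

end SecondDerivative

section InverseStereographic

variable {E : Type*} [NormedAddCommGroup E]

noncomputable def stereoFactor (u : E) : ℝ := 2 / (1 + ‖u‖ ^ 2)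

theorem stereoFactor_mul_norm_sq (w : E) : stereoFactor w * ‖w‖ ^ 2 = 2 - stereoFactor w := by
  have : 0 < 1 + ‖w‖ ^ 2 := by positivity
  simp only [stereoFactor]
  field_simp
  ring

variable [InnerProductSpace ℝ E]

/-- The component along `E` of the inverse stereographic projection
`u ↦ (2u, ‖u‖² - 1) / (1 + ‖u‖²)` of `E` onto the unit sphere of `E × ℝ`. -/
noncomputable def invStereo (u : E) : E := stereoFactor u • u

theorem contDiff_stereoFactor {n : WithTop ℕ∞} : ContDiff ℝ n (stereoFactor : E → ℝ) :=
  contDiff_const.div (contDiff_const.add (contDiff_norm_sq ℝ)) fun u => by positivity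

theorem contDiff_invStereo {n : WithTop ℕ∞} : ContDiff ℝ n (invStereo : E → E) :=
  contDiff_stereoFactor.smul contDiff_id

theorem hasFDerivAt_stereoFactor (u : E) :
    HasFDerivAt stereoFactor (-(stereoFactor u ^ 2) • innerSL ℝ u) u := by
  have hN : HasFDerivAt (fun x : E => 1 + ‖x‖ ^ 2) (2 • innerSL ℝ u) u := by
    simpa using ((hasFDerivAt_id u).norm_sq).const_add 1
  have h : HasFDerivAt (fun x : E => 2 * (1 + ‖x‖ ^ 2)⁻¹) _ u :=
    ((hasDerivAt_inv (by positivity)).comp_hasFDerivAt u hN).const_mul 2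
  simp only [stereoFactor, div_eq_mul_inv]
  refine h.congr_fderiv ?_
  ext v
  simp
  field_simp

theorem fderiv_invStereo_apply (u v : E) :
    fderiv ℝ invStereo u v = stereoFactor u • v - (stereoFactor u ^ 2 * ⟪u, v⟫) • u := by
  have h : HasFDerivAt invStereo _ u := (hasFDerivAt_stereoFactor u).smul (hasFDerivAt_id u)
  rw [h.fderiv]
  simp [mul_smul, sub_eq_add_neg]

theorem fderiv_fderiv_invStereo_apply (w v : E) :
    fderiv ℝ (fderiv ℝ invStereo) w v v =
      (2 * stereoFactor w ^ 3 * ⟪w, v⟫ ^ 2 - stereoFactor w ^ 2 * ‖v‖ ^ 2) • w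
        - (2 * stereoFactor w ^ 2 * ⟪w, v⟫) • v := by
  rw [← fderiv_fderiv_apply contDiff_invStereo.contDiffAt.differentiableAt_fderiv]
  simp only [fderiv_invStereo_apply]
  have hρ := hasFDerivAt_stereoFactor w
  have hinner : HasFDerivAt (fun u : E => ⟪u, v⟫) (innerSL ℝ v) w := by
    simpa [real_inner_comm] using (innerSL ℝ v).hasFDerivAt (x := w)
  have h : HasFDerivAt (fun u => stereoFactor u • v - (stereoFactor u ^ 2 * ⟪u, v⟫) • u) _ w :=
    (hρ.smul_const v).sub (((hρ.pow 2).mul hinner).smul (hasFDerivAt_id w))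
  rw [h.fderiv]
  simp
  module

theorem laplacian_invStereo [FiniteDimensional ℝ E] (w : E) :
    Δ (invStereo : E → E) w = ((2 - Module.finrank ℝ E : ℝ) * stereoFactor w ^ 2) • w
      - (2 * stereoFactor w ^ 2) • invStereo w := by
  have hsum : ∑ i, ⟪w, stdOrthonormalBasis ℝ E i⟫ • stdOrthonormalBasis ℝ E i = w := by
    simpa only [real_inner_comm] using (stdOrthonormalBasis ℝ E).sum_repr' w
  rw [laplacian_eq_iteratedFDeriv_stdOrthonormalBasis]
  simp only [iteratedFDeriv_two_apply, Matrix.cons_val_zero, Matrix.cons_val_one,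
    fderiv_fderiv_invStereo_apply, Finset.sum_sub_distrib, OrthonormalBasis.norm_eq_one,
    ← Finset.sum_smul, mul_smul, ← Finset.smul_sum, hsum]
  simp only [← Finset.mul_sum, OrthonormalBasis.sum_sq_inner_left, one_pow, Finset.sum_const,
    Finset.card_univ, Fintype.card_fin, nsmul_eq_mul, mul_one, invStereo]
  linear_combination (norm := module) (2 * stereoFactor w ^ 2 * stereoFactor_mul_norm_sq w) • w

end InverseStereographic

section ComplexPlane

variable {G : Type*} [NormedAddCommGroup G] [NormedSpace ℝ G]

theorem laplacian_eq_fderiv_fderiv_complexPlane (φ : ℂ → G) (z : ℂ) :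
    Δ φ z = fderiv ℝ (fderiv ℝ φ) z 1 1 + fderiv ℝ (fderiv ℝ φ) z I I := by
  simp [laplacian_eq_iteratedFDeriv_complexPlane, iteratedFDeriv_two_apply]

theorem ContinuousLinearMap.apply_self_add_apply_mul_I_self (B : ℂ →L[ℝ] ℂ →L[ℝ] G)
    (hB : ∀ x y, B x y = B y x) (a : ℂ) :
    B a a + B (a * I) (a * I) = ‖a‖ ^ 2 • (B 1 1 + B I I) := by
  obtain ⟨x, y, rfl⟩ : ∃ x y : ℝ, a = x • (1 : ℂ) + y • I := ⟨a.re, a.im, by simp⟩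
  have hrot : (x • (1 : ℂ) + y • I) * I = (-y) • (1 : ℂ) + x • I := by
    simp [Complex.ext_iff]
  have hnorm : ‖x • (1 : ℂ) + y • I‖ ^ 2 = x ^ 2 + y ^ 2 := by
    simp [Complex.sq_norm, Complex.normSq_apply]
    ring
  rw [hrot, hnorm]
  simp only [map_add, map_smul, add_apply, smul_apply, hB I 1]
  module

theorem DifferentiableAt.fderiv_real_apply {f : ℂ → ℂ} {z : ℂ} (hf : DifferentiableAt ℂ f z)
    (v : ℂ) : fderiv ℝ f z v = deriv f z * v := by
  rw [(hf.hasDerivAt.hasFDerivAt.restrictScalars ℝ).fderiv]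
  simp [mul_comm]

theorem laplacian_comp_analyticAt {F : ℂ → G} {f : ℂ → ℂ} {z : ℂ}
    (hF : ContDiffAt ℝ 2 F (f z)) (hf : AnalyticAt ℂ f z) :
    Δ (F ∘ f) z = ‖deriv f z‖ ^ 2 • Δ F (f z) := by
  have hfR : ContDiffAt ℝ 2 f z := hf.contDiffAt.restrict_scalars ℝ
  have hΔf : fderiv ℝ (fderiv ℝ f) z 1 1 + fderiv ℝ (fderiv ℝ f) z I I = 0 := by
    rw [← laplacian_eq_fderiv_fderiv_complexPlane, hf.harmonicAt.2.eq_of_nhds, Pi.zero_apply]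
  rw [laplacian_eq_fderiv_fderiv_complexPlane, laplacian_eq_fderiv_fderiv_complexPlane,
    fderiv_fderiv_comp_apply hF hfR, fderiv_fderiv_comp_apply hF hfR,
    hf.differentiableAt.fderiv_real_apply, hf.differentiableAt.fderiv_real_apply, mul_one,
    ← ContinuousLinearMap.apply_self_add_apply_mul_I_self _ (hF.isSymmSndFDerivAt (by simp)),
    add_add_add_comm, ← map_add, hΔf, map_zero, add_zero]

end ComplexPlane

theorem invStereo_complex (w : ℂ) : invStereo w = 2 * w / ((1 + ‖w‖ ^ 2 : ℝ) : ℂ) := by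
  rw [invStereo, stereoFactor, Complex.real_smul]
  push_cast
  ring

theorem laplacian_invStereo_complex (w : ℂ) :
    Δ (invStereo : ℂ → ℂ) w = -(2 * stereoFactor w ^ 2) • invStereo w := by
  simp [laplacian_invStereo, Complex.finrank_real_complex]

theorem laplacian_invStereo_comp_analyticAt {f : ℂ → ℂ} {z : ℂ} (hf : AnalyticAt ℂ f z) :
    Δ (invStereo ∘ f) z =
      -((8 * ‖deriv f z‖ ^ 2 / (1 + ‖f z‖ ^ 2) ^ 2 : ℝ) : ℂ) * invStereo (f z) := by
  rw [laplacian_comp_analyticAt contDiff_invStereo.contDiffAt hf, laplacian_invStereo_complex,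
    smul_smul, Complex.real_smul, stereoFactor]
  push_cast
  field_simp
  ring

theorem lapC_eq_laplacian {φ : ℂ → ℂ} {z : ℂ} (h : DifferentiableAt ℝ (fderiv ℝ φ) z) :
    lapC φ z = Δ φ z := by
  rw [lapC, laplacian_eq_fderiv_fderiv_complexPlane, fderiv_fderiv_apply h, fderiv_fderiv_apply h]

theorem lapR_eq_laplacian {φ : ℂ → ℝ} {z : ℂ} (h : DifferentiableAt ℝ (fderiv ℝ φ) z) :
    lapR φ z = Δ φ z := by
  rw [lapR, laplacian_eq_fderiv_fderiv_complexPlane, fderiv_fderiv_apply h, fderiv_fderiv_apply h]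

theorem stmt_1 (U : Set ℂ) (hU : IsOpen U) (f : ℂ → ℂ)
    (hf : DifferentiableOn ℂ f U) :
    (∀ z ∈ U,
      lapC (fun w => 2 * f w / ((1 + ‖f w‖ ^ 2 : ℝ) : ℂ)) z
        = -((8 * ‖deriv f z‖ ^ 2 / (1 + ‖f z‖ ^ 2) ^ 2 : ℝ) : ℂ) *
            (2 * f z / ((1 + ‖f z‖ ^ 2 : ℝ) : ℂ))) ∧
    (∀ z ∈ U,
      lapR (fun w => (2 * f w / ((1 + ‖f w‖ ^ 2 : ℝ) : ℂ)).re) z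
        = -(8 * ‖deriv f z‖ ^ 2 / (1 + ‖f z‖ ^ 2) ^ 2) *
            (2 * f z / ((1 + ‖f z‖ ^ 2 : ℝ) : ℂ)).re ∧
      lapR (fun w => (2 * f w / ((1 + ‖f w‖ ^ 2 : ℝ) : ℂ)).im) z
        = -(8 * ‖deriv f z‖ ^ 2 / (1 + ‖f z‖ ^ 2) ^ 2) *
            (2 * f z / ((1 + ‖f z‖ ^ 2 : ℝ) : ℂ)).im) ∧
    (∀ z ∈ U, deriv f z ≠ 0 →
      -((1 + ‖f z‖ ^ 2) ^ 2 / (4 * ‖deriv f z‖ ^ 2)) *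
          lapR (fun w => (2 * f w / ((1 + ‖f w‖ ^ 2 : ℝ) : ℂ)).re) z
        = 2 * (2 * f z / ((1 + ‖f z‖ ^ 2 : ℝ) : ℂ)).re ∧
      -((1 + ‖f z‖ ^ 2) ^ 2 / (4 * ‖deriv f z‖ ^ 2)) *
          lapR (fun w => (2 * f w / ((1 + ‖f w‖ ^ 2 : ℝ) : ℂ)).im) z
        = 2 * (2 * f z / ((1 + ‖f z‖ ^ 2 : ℝ) : ℂ)).im) := by
  simp only [← invStereo_complex]
  have hanalytic : ∀ z ∈ U, AnalyticAt ℂ f z := fun z hz => hf.analyticAt (hU.mem_nhds hz)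
  have hsmooth : ∀ z ∈ U, ContDiffAt ℝ 2 (invStereo ∘ f) z := fun z hz =>
    contDiff_invStereo.contDiffAt.comp z ((hanalytic z hz).contDiffAt.restrict_scalars ℝ)
  have hpart : ∀ z ∈ U, ∀ T : ℂ →L[ℝ] ℝ, lapR (T ∘ invStereo ∘ f) z =
      -(8 * ‖deriv f z‖ ^ 2 / (1 + ‖f z‖ ^ 2) ^ 2) * T (invStereo (f z)) := by
    intro z hz T
    rw [lapR_eq_laplacian ((hsmooth z hz).continuousLinearMap_comp T).differentiableAt_fderiv,
      (hsmooth z hz).laplacian_CLM_comp_left, Function.comp_apply,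
      laplacian_invStereo_comp_analyticAt (hanalytic z hz),
      ← Complex.ofReal_neg, ← Complex.real_smul, map_smul, smul_eq_mul]
  refine ⟨fun z hz => ?_, fun z hz => ⟨hpart z hz reCLM, hpart z hz imCLM⟩,
    fun z hz hderiv => ?_⟩
  · exact (lapC_eq_laplacian (hsmooth z hz).differentiableAt_fderiv).trans
      (laplacian_invStereo_comp_analyticAt (hanalytic z hz))
  · have hre : lapR (fun w => (invStereo (f w)).re) z = _ := hpart z hz reCLM
    have him : lapR (fun w => (invStereo (f w)).im) z = _ := hpart z hz imCLM
    have : ‖deriv f z‖ ≠ 0 := norm_ne_zero_iff.mpr hderiv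
    rw [hre, him, reCLM_apply, imCLM_apply]
    constructor <;> (field_simp; ring)
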